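/- Let B be a countable MV-algebra and b ∈ B. Then b ⊕ b = b (i.e., b is an idempotent, a member of the boolean skeleton Boole(B)) if and only if b is ⊑-minimal in B, i.e., for every c ∈ B, c ⊑ b implies c = b. -/
import Mathlib


/-- An MV-algebra: a commutative monoid `(B, ⊕, 0)` with an involution `¬`
satisfying `¬0 ⊕ x = ¬0` and the Łukasiewicz axiom
`¬(¬x ⊕ y) ⊕ y = ¬(¬y ⊕ x) ⊕ x`. -/
class MVAlgebra (B : Type*) where
  oplus : B → B → B
  mvneg : B → B
  zero : B
  oplus_assoc : ∀ x y z : B, oplus (oplus x y) z = oplus x (oplus y z)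
  oplus_comm : ∀ x y : B, oplus x y = oplus y x
  oplus_zero : ∀ x : B, oplus x zero = x
  mvneg_mvneg : ∀ x : B, mvneg (mvneg x) = x
  oplus_mvneg_zero : ∀ x : B, oplus (mvneg zero) x = mvneg zero
  luk : ∀ x y : B, oplus (mvneg (oplus (mvneg x) y)) y = oplus (mvneg (oplus (mvneg y) x)) x

namespace MVAlgebra

variable {B : Type*} [MVAlgebra B]

/-- `1 := ¬0`. -/
def one : B := mvneg zero

/-- `x ⊙ y := ¬(¬x ⊕ ¬y)`. -/
def odot (x y : B) : B := mvneg (oplus (mvneg x) (mvneg y))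

/-- `x ⊖ y := x ⊙ ¬y`. -/
def ominus (x y : B) : B := odot x (mvneg y)

/-- The natural order: `x ≤ y` iff `¬x ⊕ y = 1`. -/
def mvle (x y : B) : Prop := oplus (mvneg x) y = one

/-- Strict natural order. -/
def mvlt (x y : B) : Prop := mvle x y ∧ x ≠ y

/-- The transformation `x ↦ x_σ = (x ⊙ (x ⊕ x)) ⊕ (x ⊙ x)`. -/
def sigmaEl (x : B) : B := oplus (odot x (oplus x x)) (odot x x)

/-- An ideal: contains `0`, closed under `⊕`, downward closed for `≤`. -/
def IsIdeal (I : Set B) : Prop :=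
  zero ∈ I ∧ (∀ x y : B, x ∈ I → y ∈ I → oplus x y ∈ I) ∧
    (∀ x y : B, y ∈ I → mvle x y → x ∈ I)

/-- A prime ideal: a proper ideal `P` with `x ⊖ y ∈ P` or `y ⊖ x ∈ P` for all `x, y`. -/
def IsPrimeIdeal (P : Set B) : Prop :=
  IsIdeal P ∧ one ∉ P ∧ ∀ x y : B, ominus x y ∈ P ∨ ominus y x ∈ P

/-- `x ⊑ y` iff for every prime ideal `P`: if `¬y ⊖ y ∉ P` then `x ⊖ y ∈ P`,
and if `y ⊖ ¬y ∉ P` then `y ⊖ x ∈ P`. -/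
def sqle (x y : B) : Prop :=
  ∀ P : Set B, IsPrimeIdeal P →
    (ominus (mvneg y) y ∉ P → ominus x y ∈ P) ∧
    (ominus y (mvneg y) ∉ P → ominus y x ∈ P)

end MVAlgebra

open MVAlgebra

namespace MVAlgebra

variable {B : Type*} [MVAlgebra B]

theorem zero_oplus (x : B) : oplus zero x = x := by rw [oplus_comm, oplus_zero]

theorem mvneg_one : mvneg (one : B) = zero := by rw [one, mvneg_mvneg]

theorem oplus_one (x : B) : oplus x one = one := by rw [oplus_comm, one, oplus_mvneg_zero]

theorem one_oplus (x : B) : oplus one x = one := by rw [one, oplus_mvneg_zero]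

theorem mvneg_inj {x y : B} (h : mvneg x = mvneg y) : x = y := by
  rw [← mvneg_mvneg x, h, mvneg_mvneg]

theorem neg_oplus_self (x : B) : oplus (mvneg x) x = one := by
  have h := luk x (one : B)
  simp only [oplus_one, mvneg_one, zero_oplus] at h
  exact h.symm

theorem oplus_neg_self (x : B) : oplus x (mvneg x) = one := by
  rw [oplus_comm, neg_oplus_self]

theorem ominus_def (x y : B) : ominus x y = mvneg (oplus (mvneg x) y) := by
  rw [ominus, odot, mvneg_mvneg]

theorem ominus_self (x : B) : ominus x x = zero := by
  rw [ominus_def, neg_oplus_self, mvneg_one]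

theorem luk' (x y : B) : oplus (ominus x y) y = oplus (ominus y x) x := by
  rw [ominus_def, ominus_def]; exact luk x y

theorem mvle_refl (x : B) : mvle x x := neg_oplus_self x

theorem mvle_antisymm {x y : B} (h1 : mvle x y) (h2 : mvle y x) : x = y := by
  have h := luk x y
  rw [mvle] at h1 h2
  rw [h1, h2, mvneg_one, zero_oplus, zero_oplus] at h
  exact h.symm

theorem ominus_eq_zero {x y : B} (h : mvle x y) : ominus x y = zero := by
  rw [ominus_def, h, mvneg_one]

theorem mvle_of_ominus_eq_zero {x y : B} (h : ominus x y = zero) : mvle x y := by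
  rw [ominus_def] at h
  have := congrArg mvneg h
  rwa [mvneg_mvneg, ← one] at this

theorem sub_oplus {x y : B} (h : mvle x y) : oplus (ominus y x) x = y := by
  have := luk' y x
  rwa [ominus_eq_zero h, zero_oplus] at this

theorem mvle_oplus_left (x t : B) : mvle x (oplus x t) := by
  rw [mvle, ← oplus_assoc, neg_oplus_self, one_oplus]

theorem mvle_oplus_right (x t : B) : mvle x (oplus t x) := by
  rw [oplus_comm]; exact mvle_oplus_left x t

theorem mvle_of_eq_oplus {x y s : B} (h : y = oplus x s) : mvle x y := h ▸ mvle_oplus_left x s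

theorem mvle_trans {x y z : B} (h1 : mvle x y) (h2 : mvle y z) : mvle x z := by
  have e1 : y = oplus x (ominus y x) := by rw [oplus_comm, sub_oplus h1]
  have e2 : z = oplus y (ominus z y) := by rw [oplus_comm, sub_oplus h2]
  rw [e1, oplus_assoc] at e2
  exact mvle_of_eq_oplus e2

theorem oplus_mono_left {x y : B} (t : B) (h : mvle x y) : mvle (oplus x t) (oplus y t) := by
  have e : y = oplus x (ominus y x) := by rw [oplus_comm, sub_oplus h]
  have e2 : oplus y t = oplus (oplus x t) (ominus y x) := by
    conv_lhs => rw [e]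
    rw [oplus_assoc, oplus_comm (ominus y x) t, ← oplus_assoc]
  exact mvle_of_eq_oplus e2

theorem oplus_mono_right {x y : B} (t : B) (h : mvle x y) : mvle (oplus t x) (oplus t y) := by
  rw [oplus_comm t, oplus_comm t]; exact oplus_mono_left t h

theorem oplus_mono {x y u v : B} (h1 : mvle x y) (h2 : mvle u v) :
    mvle (oplus x u) (oplus y v) :=
  mvle_trans (oplus_mono_left u h1) (oplus_mono_right y h2)

theorem mvneg_antitone {x y : B} (h : mvle x y) : mvle (mvneg y) (mvneg x) := by
  rw [mvle, mvneg_mvneg, oplus_comm]; exact h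

theorem odot_comm (x y : B) : odot x y = odot y x := by rw [odot, odot, oplus_comm]

theorem odot_mono_left {x y : B} (t : B) (h : mvle x y) : mvle (odot x t) (odot y t) := by
  rw [odot, odot]
  exact mvneg_antitone (oplus_mono_left (mvneg t) (mvneg_antitone h))

theorem odot_mono_right {x y : B} (t : B) (h : mvle x y) : mvle (odot t x) (odot t y) := by
  rw [odot_comm t, odot_comm t]; exact odot_mono_left t h

theorem ominus_mono_left {x y : B} (t : B) (h : mvle x y) : mvle (ominus x t) (ominus y t) :=
  odot_mono_left _ h

theorem ominus_anti_right {x y : B} (t : B) (h : mvle x y) :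
    mvle (ominus t y) (ominus t x) :=
  odot_mono_right t (mvneg_antitone h)

theorem odot_le_left (x y : B) : mvle (odot x y) x := by
  rw [mvle, odot, mvneg_mvneg, oplus_assoc, oplus_comm (mvneg y), ← oplus_assoc, neg_oplus_self, one_oplus]

theorem odot_le_right (x y : B) : mvle (odot x y) y := by rw [odot_comm]; exact odot_le_left y x

theorem zero_le (x : B) : mvle zero x := by rw [mvle, ← one, one_oplus]

theorem le_one (x : B) : mvle x one := by rw [mvle, oplus_one]

theorem le_zero_eq {x : B} (h : mvle x zero) : x = zero := mvle_antisymm h (zero_le x)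

theorem odot_one (x : B) : odot x one = x := by
  rw [odot, mvneg_one, oplus_zero, mvneg_mvneg]

theorem one_odot (x : B) : odot one x = x := by rw [odot_comm, odot_one]

theorem odot_zero (x : B) : odot x zero = zero := by
  rw [odot, ← one, oplus_one, mvneg_one]

theorem zero_odot (x : B) : odot zero x = zero := by rw [odot_comm, odot_zero]

theorem odot_assoc (x y z : B) : odot (odot x y) z = odot x (odot y z) := by
  rw [odot, odot, odot, odot, mvneg_mvneg, mvneg_mvneg, oplus_assoc]

theorem odot_neg_self (x : B) : odot x (mvneg x) = zero := by
  rw [odot, mvneg_mvneg, neg_oplus_self, mvneg_one]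

theorem neg_odot_self (x : B) : odot (mvneg x) x = zero := by rw [odot_comm, odot_neg_self]

theorem ominus_le_self (x y : B) : mvle (ominus x y) x := odot_le_left x (mvneg y)

theorem ominus_le_neg (x y : B) : mvle (ominus x y) (mvneg y) := odot_le_right x (mvneg y)

theorem le_ominus_oplus (x t : B) : mvle x (oplus (ominus x t) t) := by
  rw [luk']; exact mvle_oplus_right x (ominus t x)

theorem mvneg_ominus (a b : B) : mvneg (ominus a b) = oplus (mvneg a) b := by
  rw [ominus_def, mvneg_mvneg]

theorem oplus_ominus_le (y z : B) : mvle (ominus (oplus y z) y) z := by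
  rw [mvle, mvneg_ominus, oplus_assoc, neg_oplus_self]

/-- Residuation: `x ⊖ y ≤ z ↔ x ≤ y ⊕ z`. -/
theorem ominus_le_iff {x y z : B} : mvle (ominus x y) z ↔ mvle x (oplus y z) := by
  constructor
  · intro h
    have h1 : mvle x (oplus (ominus x y) y) := le_ominus_oplus x y
    have h2 : mvle (oplus (ominus x y) y) (oplus z y) := oplus_mono_left y h
    have := mvle_trans h1 h2
    rwa [oplus_comm z y] at this
  · intro h
    have h1 : mvle (ominus x y) (ominus (oplus y z) y) := ominus_mono_left y h
    exact mvle_trans h1 (oplus_ominus_le y z)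

theorem ominus_eq_odot_neg (x y : B) : ominus x (mvneg y) = odot x y := by
  rw [ominus, mvneg_mvneg]

theorem odot_le_iff {x y z : B} : mvle (odot x y) z ↔ mvle x (oplus (mvneg y) z) := by
  rw [← ominus_eq_odot_neg]; exact ominus_le_iff

/-- Join. -/
def sup (x y : B) : B := oplus (ominus x y) y

/-- Meet. -/
def inf (x y : B) : B := mvneg (sup (mvneg x) (mvneg y))

theorem sup_comm (x y : B) : sup x y = sup y x := by rw [sup, sup, luk']

theorem le_sup_right (x y : B) : mvle y (sup x y) := mvle_oplus_right y (ominus x y)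

theorem le_sup_left (x y : B) : mvle x (sup x y) := by rw [sup_comm]; exact le_sup_right y x

theorem sup_le {x y c : B} (h1 : mvle x c) (h2 : mvle y c) : mvle (sup x y) c := by
  have e : sup y c = c := by rw [sup, ominus_eq_zero h2, zero_oplus]
  have : mvle (sup x y) (sup c y) := oplus_mono_left y (ominus_mono_left y h1)
  rw [sup_comm c y, e] at this
  exact this

theorem mvneg_inf (x y : B) : mvneg (inf x y) = sup (mvneg x) (mvneg y) := by
  rw [inf, mvneg_mvneg]

theorem mvneg_sup (x y : B) : mvneg (sup x y) = inf (mvneg x) (mvneg y) := by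
  rw [inf, mvneg_mvneg, mvneg_mvneg]

theorem inf_comm (x y : B) : inf x y = inf y x := by rw [inf, inf, sup_comm]

theorem inf_le_left (x y : B) : mvle (inf x y) x := by
  have := mvneg_antitone (le_sup_left (mvneg x) (mvneg y))
  rwa [← inf, mvneg_mvneg] at this

theorem inf_le_right (x y : B) : mvle (inf x y) y := by rw [inf_comm]; exact inf_le_left y x

theorem le_inf {x y c : B} (h1 : mvle c x) (h2 : mvle c y) : mvle c (inf x y) := by
  have := mvneg_antitone (sup_le (mvneg_antitone h1) (mvneg_antitone h2))
  rwa [← inf, mvneg_mvneg] at this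

theorem inf_eq₁ (x y : B) : inf x y = odot (oplus x (mvneg y)) y := by
  rw [inf, sup, ominus_def, mvneg_mvneg, odot]

theorem inf_eq₂ (x y : B) : inf x y = odot x (oplus (mvneg x) y) := by
  rw [inf_comm, inf_eq₁, odot_comm, oplus_comm]

theorem ominus_oplus (p q : B) : ominus (oplus p q) p = inf (mvneg p) q := by
  rw [inf_eq₂, mvneg_mvneg, ominus, odot_comm]

theorem inf_eq_ominus (x y : B) : inf x y = ominus x (ominus x y) := by
  rw [inf_eq₂, ominus, mvneg_ominus]

theorem ominus_ominus (x y z : B) : ominus (ominus x y) z = ominus x (oplus y z) := by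
  rw [ominus_def, mvneg_ominus, oplus_assoc, ← ominus_def]

theorem odot_sup (x y z : B) : odot x (sup y z) = sup (odot x y) (odot x z) := by
  apply mvle_antisymm
  · rw [odot_comm, odot_le_iff]
    apply sup_le
    · rw [← odot_le_iff, odot_comm]; exact le_sup_left _ _
    · rw [← odot_le_iff, odot_comm]; exact le_sup_right _ _
  · exact sup_le (odot_mono_right x (le_sup_left y z)) (odot_mono_right x (le_sup_right y z))

theorem oplus_inf (x y z : B) : oplus x (inf y z) = inf (oplus x y) (oplus x z) := by
  apply mvneg_inj
  rw [mvneg_inf]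
  have : ∀ a b : B, mvneg (oplus a b) = odot (mvneg a) (mvneg b) := by
    intro a b; rw [odot, mvneg_mvneg, mvneg_mvneg]
  rw [this, this, this, mvneg_inf, odot_sup]

theorem ominus_inf (a p q : B) : ominus a (inf p q) = sup (ominus a p) (ominus a q) := by
  rw [ominus, mvneg_inf, odot_sup, ominus, ominus]

theorem sup_zero (u : B) : sup u zero = u := by
  rw [sup, oplus_zero]
  show odot u (mvneg zero) = u
  rw [show (mvneg zero : B) = one from rfl, odot_one]

theorem zero_sup (u : B) : sup zero u = u := by rw [sup_comm, sup_zero]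




theorem star_lemma (d y : B) : oplus (inf d (mvneg y)) y = oplus d y := by
  have h1 : inf d (mvneg y) = ominus (oplus y d) y := by
    rw [ominus_oplus, inf_comm]
  rw [h1, luk', ominus_eq_zero (mvle_oplus_left y d), zero_oplus, oplus_comm]

theorem goal1_lemma (a y : B) : mvle (inf (oplus a (odot a y)) (mvneg y)) a := by
  rw [inf_eq_ominus, ominus_eq_odot_neg, ominus_le_iff,
    oplus_comm (odot (oplus a (odot a y)) y) a]
  exact oplus_mono_right a (odot_mono_left y (mvle_oplus_left a (odot a y)))

theorem absorb (a y : B) : oplus (oplus a y) (odot a y) = oplus a y := by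
  have hAC : ∀ c : B, oplus (oplus a y) c = oplus (oplus a c) y := by
    intro c
    rw [oplus_assoc, oplus_comm y c, ← oplus_assoc]
  have e : inf (oplus a (odot a y)) (mvneg y) = inf a (mvneg y) := by
    apply mvle_antisymm
    · exact le_inf (goal1_lemma a y) (inf_le_right _ _)
    · exact le_inf (mvle_trans (inf_le_left _ _) (mvle_oplus_left a _)) (inf_le_right _ _)
  rw [hAC, ← star_lemma (oplus a (odot a y)) y, e, star_lemma]

/-- The key lemma: `(x ⊖ y) ∧ (y ⊖ x) = 0`. -/
theorem inf_ominus_eq_zero (x y : B) : inf (ominus x y) (ominus y x) = zero := by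
  have h : ominus (ominus x y) (ominus y x) = ominus x y := by
    apply mvneg_inj
    rw [mvneg_ominus, mvneg_ominus]
    rw [show ominus y x = odot (mvneg x) y from odot_comm y (mvneg x)]
    exact absorb (mvneg x) y
  rw [inf_eq_ominus, h, ominus_self]

/-- Riesz-type decomposition: `x ∧ (y ⊕ z) ≤ (x ∧ y) ⊕ (x ∧ z)`. -/
theorem inf_oplus_le (x y z : B) :
    mvle (inf x (oplus y z)) (oplus (inf x y) (inf x z)) := by
  set L := inf x (oplus y z) with hLdef
  have e : ominus L (inf x y) = ominus L y := by
    rw [ominus_inf, ominus_eq_zero (inf_le_left x (oplus y z)), zero_sup]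
  have h2 : mvle (ominus L y) x := mvle_trans (ominus_le_self L y) (inf_le_left _ _)
  have h3 : mvle (ominus L y) z :=
    mvle_trans (ominus_mono_left y (inf_le_right x (oplus y z))) (oplus_ominus_le y z)
  have h4 : mvle (ominus L (inf x y)) (inf x z) := by rw [e]; exact le_inf h2 h3
  have h5 : mvle L (oplus (ominus L (inf x y)) (inf x y)) := le_ominus_oplus L (inf x y)
  have h6 := mvle_trans h5 (oplus_mono_left (inf x y) h4)
  rwa [oplus_comm] at h6

/-- `n`-fold sum. -/
def mvnsmul : ℕ → B → B
  | 0, _ => zero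
  | n + 1, u => oplus (mvnsmul n u) u

theorem mvnsmul_add (m n : ℕ) (u : B) :
    mvnsmul (m + n) u = oplus (mvnsmul m u) (mvnsmul n u) := by
  induction n with
  | zero => simp [mvnsmul, oplus_zero]
  | succ n ih =>
    show mvnsmul ((m + n) + 1) u = _
    rw [show mvnsmul ((m+n)+1) u = oplus (mvnsmul (m+n) u) u from rfl, ih,
      show mvnsmul (n+1) u = oplus (mvnsmul n u) u from rfl, oplus_assoc]

theorem mvnsmul_le_of_le {k n : ℕ} (h : k ≤ n) (u : B) :
    mvle (mvnsmul k u) (mvnsmul n u) := by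
  have : n = k + (n - k) := by omega
  rw [this, mvnsmul_add]
  exact mvle_oplus_left _ _

theorem inf_nsmul_right {u v : B} (h : inf u v = zero) (n : ℕ) :
    inf u (mvnsmul n v) = zero := by
  induction n with
  | zero => exact le_zero_eq (inf_le_right u _)
  | succ n ih =>
    apply le_zero_eq
    have h1 := inf_oplus_le u (mvnsmul n v) v
    rw [ih, h, oplus_zero] at h1
    exact h1

theorem inf_nsmul_left {u v : B} (h : inf u v = zero) (n : ℕ) :
    inf (mvnsmul n u) v = zero := by
  rw [inf_comm]
  exact inf_nsmul_right (by rw [inf_comm]; exact h) n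

theorem inf_nsmul_nsmul {u v : B} (h : inf u v = zero) (n : ℕ) :
    inf (mvnsmul n u) (mvnsmul n v) = zero :=
  inf_nsmul_right (inf_nsmul_left h n) n

theorem oplus_four (a b c d : B) :
    oplus (oplus a b) (oplus c d) = oplus (oplus a c) (oplus b d) := by
  rw [oplus_assoc a b, ← oplus_assoc b c d, oplus_comm b c, oplus_assoc c b d,
    ← oplus_assoc a c]

theorem neg_ominus (x y : B) : ominus (mvneg x) y = mvneg (oplus x y) := by
  rw [ominus_def, mvneg_mvneg]

theorem ominus_odot (x y : B) : ominus x (odot x y) = inf x (mvneg y) := by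
  rw [inf_eq₂, ominus, show mvneg (odot x y) = oplus (mvneg x) (mvneg y) from by
    rw [odot, mvneg_mvneg]]

theorem oplus_ominus_oplus_le (q q' r : B) :
    mvle (ominus (oplus q r) (oplus q' r)) (ominus q q') := by
  rw [ominus_le_iff]
  have h1 : mvle q (oplus q' (ominus q q')) := by
    rw [oplus_comm]; exact le_ominus_oplus q q'
  have h2 := oplus_mono_left r h1
  have e : oplus (oplus q' (ominus q q')) r = oplus (oplus q' r) (ominus q q') := by
    rw [oplus_assoc, oplus_comm (ominus q q') r, ← oplus_assoc]
  rwa [e] at h2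

/-- The ideal generated by an ideal `M` and an element `u`. -/
def genIdeal (M : Set B) (u : B) : Set B :=
  {t | ∃ m ∈ M, ∃ n : ℕ, mvle t (oplus m (mvnsmul n u))}

theorem genIdeal_isIdeal {M : Set B} (hM : IsIdeal M) (u : B) : IsIdeal (genIdeal M u) := by
  refine ⟨⟨zero, hM.1, 0, zero_le _⟩, ?_, ?_⟩
  · rintro x y ⟨m1, hm1, n1, h1⟩ ⟨m2, hm2, n2, h2⟩
    refine ⟨oplus m1 m2, hM.2.1 _ _ hm1 hm2, n1 + n2, ?_⟩
    have := oplus_mono h1 h2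
    rwa [oplus_four, ← mvnsmul_add] at this
  · rintro x y ⟨m, hm, n, hy⟩ hxy
    exact ⟨m, hm, n, mvle_trans hxy hy⟩

theorem subset_genIdeal (M : Set B) (u : B) : M ⊆ genIdeal M u := by
  intro t ht
  refine ⟨t, ht, 0, ?_⟩
  rw [show mvnsmul 0 u = (zero : B) from rfl, oplus_zero]
  exact mvle_refl t

theorem mem_genIdeal_self {M : Set B} (h0 : zero ∈ M) (u : B) : u ∈ genIdeal M u := by
  refine ⟨zero, h0, 1, ?_⟩
  rw [show mvnsmul 1 u = oplus zero u from rfl, zero_oplus, zero_oplus]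
  exact mvle_refl u

/-- Every nonzero element avoids some prime ideal. -/
theorem exists_prime_notMem (a : B) (ha : a ≠ zero) :
    ∃ P : Set B, IsPrimeIdeal P ∧ a ∉ P := by
  set S : Set (Set B) := {I | IsIdeal I ∧ a ∉ I} with hS
  have h0 : ({zero} : Set B) ∈ S := by
    refine ⟨⟨rfl, ?_, ?_⟩, ?_⟩
    · intro x y hx hy
      rw [Set.mem_singleton_iff] at hx hy ⊢
      rw [hx, hy, oplus_zero]
    · intro x y hy hxy
      rw [Set.mem_singleton_iff] at hy ⊢
      rw [hy] at hxy
      exact le_zero_eq hxy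
    · simpa using ha
  have hchainS : ∀ c ⊆ S, IsChain (· ⊆ ·) c → c.Nonempty →
      ∃ ub ∈ S, ∀ s ∈ c, s ⊆ ub := by
    intro c hcS hchain hcne
    refine ⟨⋃₀ c, ⟨⟨?_, ?_, ?_⟩, ?_⟩, fun s hs => Set.subset_sUnion_of_mem hs⟩
    · obtain ⟨I, hI⟩ := hcne
      exact ⟨I, hI, (hcS hI).1.1⟩
    · rintro x y ⟨I, hI, hx⟩ ⟨J, hJ, hy⟩
      rcases hchain.total hI hJ with hIJ | hJI
      · exact ⟨J, hJ, (hcS hJ).1.2.1 x y (hIJ hx) hy⟩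
      · exact ⟨I, hI, (hcS hI).1.2.1 x y hx (hJI hy)⟩
    · rintro x y ⟨I, hI, hy⟩ hxy
      exact ⟨I, hI, (hcS hI).1.2.2 x y hy hxy⟩
    · rintro ⟨I, hI, haI⟩
      exact (hcS hI).2 haI
  obtain ⟨M, -, hMmax⟩ := zorn_subset_nonempty S hchainS _ h0
  have hMid : IsIdeal M := hMmax.1.1
  have hMa : a ∉ M := hMmax.1.2
  refine ⟨M, ⟨hMid, ?_, ?_⟩, hMa⟩
  · intro h1
    exact hMa (hMid.2.2 a one h1 (le_one a))
  · intro x y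
    by_contra hcon
    push_neg at hcon
    obtain ⟨hu, hv⟩ := hcon
    have key : ∀ w, w ∉ M → a ∈ genIdeal M w := by
      intro w hw
      by_contra haw
      have hgS : genIdeal M w ∈ S := ⟨genIdeal_isIdeal hMid w, haw⟩
      have hsub := hMmax.2 hgS (subset_genIdeal M w)
      exact hw (hsub (mem_genIdeal_self hMid.1 w))
    obtain ⟨m1, hm1, n1, hb1⟩ := key _ hu
    obtain ⟨m2, hm2, n2, hb2⟩ := key _ hv
    set n := max n1 n2 with hn
    set m := oplus m1 m2 with hm
    have h1 : mvle a (oplus m (mvnsmul n (ominus x y))) :=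
      mvle_trans hb1 (oplus_mono (mvle_oplus_left m1 m2)
        (mvnsmul_le_of_le (le_max_left n1 n2) _))
    have h2 : mvle a (oplus m (mvnsmul n (ominus y x))) :=
      mvle_trans hb2 (oplus_mono (mvle_oplus_right m2 m1)
        (mvnsmul_le_of_le (le_max_right n1 n2) _))
    have hinf := le_inf h1 h2
    rw [← oplus_inf, inf_nsmul_nsmul (inf_ominus_eq_zero x y) n, oplus_zero] at hinf
    exact hMa (hMid.2.2 a m (hMid.2.1 m1 m2 hm1 hm2) hinf)



end MVAlgebra

/-- in a countable MV-algebra `B`, an element `b` is idempotent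
(`b ⊕ b = b`, i.e. `b ∈ Boole(B)`) iff `b` is `⊑`-minimal, i.e. every `c` with
`c ⊑ b` equals `b`. -/
theorem boolean_iff_sqle_minimal {B : Type*} [MVAlgebra B] [Countable B] (b : B) :
    oplus b b = b ↔ ∀ c : B, sqle c b → c = b := by
  constructor
  · intro hb c hc
    have h1 : inf (mvneg b) b = zero := by
      have h := ominus_oplus b b
      rw [hb, ominus_self] at h
      exact h.symm
    have hbb : odot b b = b := by
      have h2 : ominus b (odot b b) = zero := by
        rw [ominus_odot, ← MVAlgebra.inf_comm, h1]
      exact mvle_antisymm (odot_le_left b b) (mvle_of_ominus_eq_zero h2)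
    have hneg : ominus (mvneg b) b = mvneg b := by
      rw [neg_ominus, hb]
    have hpos : ominus b (mvneg b) = b := by
      rw [ominus_eq_odot_neg, hbb]
    have hall : ∀ P : Set B, IsPrimeIdeal P → ominus c b ∈ P ∧ ominus b c ∈ P := by
      intro P hP
      obtain ⟨hPid, hP1, hPdisj⟩ := hP
      have hclauses := hc P ⟨hPid, hP1, hPdisj⟩
      rcases hPdisj b (mvneg b) with hcase | hcase
      · rw [hpos] at hcase
        have hnb : mvneg b ∉ P := by
          intro hnb
          have h3 := hPid.2.1 b (mvneg b) hcase hnb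
          rw [oplus_neg_self] at h3
          exact hP1 h3
        refine ⟨hclauses.1 ?_, hPid.2.2 _ b hcase (ominus_le_self b c)⟩
        rw [hneg]; exact hnb
      · rw [hneg] at hcase
        have hbP : b ∉ P := by
          intro hbP
          have h3 := hPid.2.1 b (mvneg b) hbP hcase
          rw [oplus_neg_self] at h3
          exact hP1 h3
        refine ⟨hPid.2.2 _ (mvneg b) hcase (ominus_le_neg c b), hclauses.2 ?_⟩
        rw [hpos]; exact hbP
    have hz1 : ominus c b = zero := by
      by_contra hne
      obtain ⟨P, hP, haP⟩ := exists_prime_notMem _ hne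
      exact haP (hall P hP).1
    have hz2 : ominus b c = zero := by
      by_contra hne
      obtain ⟨P, hP, haP⟩ := exists_prime_notMem _ hne
      exact haP (hall P hP).2
    exact mvle_antisymm (mvle_of_ominus_eq_zero hz1) (mvle_of_ominus_eq_zero hz2)
  · intro h
    have hs : sqle (sigmaEl b) b := by
      intro P hP
      obtain ⟨hPid, hP1, hPdisj⟩ := hP
      constructor
      · intro hnb
        have hcase : ominus b (mvneg b) ∈ P := (hPdisj b (mvneg b)).resolve_right hnb
        apply hPid.2.2 _ _ hcase
        rw [ominus_le_iff, ominus_eq_odot_neg, sigmaEl]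
        exact oplus_mono_left (odot b b) (odot_le_left b (oplus b b))
      · intro hnb
        have hcase : ominus (mvneg b) b ∈ P := (hPdisj b (mvneg b)).resolve_left hnb
        apply hPid.2.2 _ _ hcase
        rw [neg_ominus, ominus_le_iff, sigmaEl]
        have h0 : mvle b (oplus (odot b (oplus b b)) (mvneg (oplus b b))) := by
          rw [← ominus_le_iff, ominus_odot]
          exact inf_le_right _ _
        have hins : mvle (oplus (odot b (oplus b b)) (mvneg (oplus b b)))
            (oplus (odot b (oplus b b)) (oplus (odot b b) (mvneg (oplus b b)))) :=
          oplus_mono_right _ (mvle_oplus_right _ _)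
        rw [← oplus_assoc] at hins
        exact mvle_trans h0 hins
    have hσ : sigmaEl b = b := h _ hs
    have hs2 : sqle (odot b b) b := by
      intro P hP
      obtain ⟨hPid, hP1, hPdisj⟩ := hP
      refine ⟨fun _ => ?_, fun hnbP => ?_⟩
      · rw [ominus_eq_zero (odot_le_left b b)]
        exact hPid.1
      · have h2b : mvneg (oplus b b) ∈ P := by
          have h3 := (hPdisj b (mvneg b)).resolve_left hnbP
          rwa [neg_ominus] at h3
        have ht : inf (mvneg b) (odot b b) ∈ P := by
          rw [← ominus_oplus b (odot b b)]
          apply hPid.2.2 _ _ h2b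
          have key : mvle (ominus (oplus b (odot b b)) (sigmaEl b)) (mvneg (oplus b b)) := by
            rw [sigmaEl]
            refine mvle_trans (oplus_ominus_oplus_le b (odot b (oplus b b)) (odot b b)) ?_
            rw [ominus_odot]
            exact inf_le_right _ _
          rwa [hσ] at key
        rcases hPdisj (mvneg b) (odot b b) with hA | hB
        · have e2 : ominus (mvneg b) (inf (mvneg b) (odot b b)) = ominus (mvneg b) (odot b b) := by
            rw [ominus_inf, ominus_self, zero_sup]
          have hnbmem : mvneg b ∈ P := by
            apply hPid.2.2 _ _ (hPid.2.1 _ _ (e2 ▸ hA) ht)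
            exact le_ominus_oplus _ _
          apply hPid.2.2 _ _ hnbmem
          rw [ominus_odot]
          exact inf_le_right b (mvneg b)
        · exfalso
          apply hnbP
          rw [ominus_eq_odot_neg]
          have e2 : ominus (odot b b) (inf (mvneg b) (odot b b)) = ominus (odot b b) (mvneg b) := by
            rw [ominus_inf, ominus_self, sup_zero]
          exact hPid.2.2 _ _ (hPid.2.1 _ _ (e2 ▸ hB) ht) (le_ominus_oplus _ _)
    have hbb : odot b b = b := h _ hs2
    have h1 : inf b (mvneg b) = zero := by
      rw [← ominus_odot b b, hbb, ominus_self]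
    have h2 : ominus (oplus b b) b = zero := by
      rw [ominus_oplus, MVAlgebra.inf_comm, h1]
    exact mvle_antisymm (mvle_of_ominus_eq_zero h2) (mvle_oplus_left b b)
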